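/- arXiv:1704.04524 — 2 statements merged into one kernel-verified Lean document; each statement's English description precedes it below -/
import Mathlib

section
/- The vector z* = D⁻¹(v − λ*c + μ*eₙ) is the unique minimizer of the primal problem: for every z ∈ ℝⁿ with c^⊤z = 0 and zₙ ≥ 0 one has f(z*) ≤ f(z), with equality only if z = z*; moreover z* itself is feasible, i.e. c^⊤z* = 0 and z*ₙ ≥ 0. -/
/-!
With multipliers `λ*` for `c^⊤z = 0` and `μ* ≥ 0` for `zₙ ≥ 0`, the point `z*` satisfies the KKT
conditions `D z* = v - λ* c + μ* eₙ`, `μ* z*ₙ = 0` and `c^⊤z* = 0`; the case split in `λ*` is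
exactly the choice between an inactive (`μ* = 0`) and an active (`z*ₙ = 0`) sign constraint.
For the separable quadratic `f` these conditions give, for every feasible `z`,
`f z - f z* = ½ ∑ dᵢ (zᵢ - z*ᵢ)² + μ* zₙ ≥ 0`, with equality only at `z = z*` since `D` is
positive definite.
-/

open Finset

noncomputable section

namespace Stmt0

/-- The last index of `Fin (n+2)` (corresponding to the `n`-th coordinate
of an `n`-dimensional problem with `n ≥ 2`). -/
def lastIdx (n : ℕ) : Fin (n + 2) := Fin.last (n + 1)

variable {n : ℕ}

/-- `c^⊤ D⁻¹ v` for the diagonal matrix `D = diag d`. -/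
def cDv (d v c : Fin (n + 2) → ℝ) : ℝ := ∑ i, c i * v i / d i

/-- `c^⊤ D⁻¹ c` for the diagonal matrix `D = diag d`. -/
def cDc (d c : Fin (n + 2) → ℝ) : ℝ := ∑ i, c i * c i / d i

/-- The indicator `1_A`. -/
def indA (d v c : Fin (n + 2) → ℝ) : ℝ :=
  if v (lastIdx n) - cDv d v c / cDc d c * c (lastIdx n) < 0 then 1 else 0

/-- `λ*`. -/
def lamStar (d v c : Fin (n + 2) → ℝ) : ℝ :=
  (cDv d v c - c (lastIdx n) * v (lastIdx n) / d (lastIdx n) * indA d v c) /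
    (cDc d c - c (lastIdx n) ^ 2 / d (lastIdx n) * indA d v c)

/-- `μ* = (vₙ - λ* cₙ)⁻ = max (-(vₙ - λ* cₙ)) 0`. -/
def muStar (d v c : Fin (n + 2) → ℝ) : ℝ :=
  max (-(v (lastIdx n) - lamStar d v c * c (lastIdx n))) 0

/-- `z* = D⁻¹ (v - λ* c + μ* eₙ)`. -/
def zStar (d v c : Fin (n + 2) → ℝ) : Fin (n + 2) → ℝ := fun i =>
  (v i - lamStar d v c * c i + muStar d v c * (if i = lastIdx n then 1 else 0)) / d i

/-- The primal cost function `f(z) = ½ z^⊤ D z - v^⊤ z`. -/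
def f (d v z : Fin (n + 2) → ℝ) : ℝ :=
  (1 / 2) * ∑ i, d i * z i ^ 2 - ∑ i, v i * z i

theorem f_sub_f (d v z w : Fin (n + 2) → ℝ) :
    f d v z - f d v w =
      1 / 2 * ∑ i, d i * (z i - w i) ^ 2 + ∑ i, (d i * w i - v i) * (z i - w i) := by
  simp only [f, Finset.mul_sum, ← Finset.sum_sub_distrib, ← Finset.sum_add_distrib]
  exact Finset.sum_congr rfl fun i _ => by ring

/-- KKT conditions for minimizing `f d v` subject to `∑ i, c i * z i = 0` and `0 ≤ z k`,
with multiplier `lam` for the equality and `mu` for the sign constraint. -/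
structure IsKKTPoint (d v c : Fin (n + 2) → ℝ) (k : Fin (n + 2)) (w : Fin (n + 2) → ℝ)
    (lam mu : ℝ) : Prop where
  stationary : ∀ i, d i * w i = v i - lam * c i + mu * (if i = k then 1 else 0)
  dual_nonneg : 0 ≤ mu
  sum_mul_eq_zero : ∑ i, c i * w i = 0
  nonneg : 0 ≤ w k
  complementary : mu * w k = 0

namespace IsKKTPoint

variable {d v c w z : Fin (n + 2) → ℝ} {k : Fin (n + 2)} {lam mu : ℝ}

theorem sum_grad_mul_sub_eq (h : IsKKTPoint d v c k w lam mu) (hcz : ∑ i, c i * z i = 0) :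
    ∑ i, (d i * w i - v i) * (z i - w i) = mu * z k := by
  have hterm : ∀ i, (d i * w i - v i) * (z i - w i) =
      -lam * (c i * z i - c i * w i) + if i = k then mu * (z i - w i) else 0 := by
    intro i
    rw [h.stationary]
    split_ifs <;> ring
  simp only [hterm, Finset.sum_add_distrib, ← Finset.mul_sum, Finset.sum_sub_distrib, hcz,
    h.sum_mul_eq_zero, Finset.sum_ite_eq', Finset.mem_univ, if_true]
  linear_combination -h.complementary

theorem f_sub_f_eq (h : IsKKTPoint d v c k w lam mu) (hcz : ∑ i, c i * z i = 0) :
    f d v z - f d v w = 1 / 2 * ∑ i, d i * (z i - w i) ^ 2 + mu * z k := by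
  rw [f_sub_f, h.sum_grad_mul_sub_eq hcz]

theorem f_le (h : IsKKTPoint d v c k w lam mu) (hd : ∀ i, 0 ≤ d i)
    (hcz : ∑ i, c i * z i = 0) (hzk : 0 ≤ z k) : f d v w ≤ f d v z := by
  have hsq : 0 ≤ ∑ i, d i * (z i - w i) ^ 2 :=
    Finset.sum_nonneg fun i _ => mul_nonneg (hd i) (sq_nonneg _)
  linarith [h.f_sub_f_eq hcz, mul_nonneg h.dual_nonneg hzk]

theorem eq_of_f_eq (h : IsKKTPoint d v c k w lam mu) (hd : ∀ i, 0 < d i)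
    (hcz : ∑ i, c i * z i = 0) (hzk : 0 ≤ z k) (hf : f d v w = f d v z) : z = w := by
  have hterm : ∀ i, 0 ≤ d i * (z i - w i) ^ 2 := fun i => mul_nonneg (hd i).le (sq_nonneg _)
  have hsq : ∑ i, d i * (z i - w i) ^ 2 = 0 := by
    linarith [h.f_sub_f_eq hcz, mul_nonneg h.dual_nonneg hzk,
      Finset.sum_nonneg fun i (_ : i ∈ Finset.univ) => hterm i]
  funext i
  have hi := (Finset.sum_eq_zero_iff_of_nonneg fun i _ => hterm i).1 hsq i (Finset.mem_univ i)
  have hsq_i : (z i - w i) ^ 2 = 0 := (mul_eq_zero.1 hi).resolve_left (hd i).ne'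
  exact sub_eq_zero.1 (pow_eq_zero_iff two_ne_zero |>.1 hsq_i)

end IsKKTPoint

section zStar

variable {d v c : Fin (n + 2) → ℝ}

theorem mul_zStar (hd : ∀ i, d i ≠ 0) (i : Fin (n + 2)) :
    d i * zStar d v c i =
      v i - lamStar d v c * c i + muStar d v c * (if i = lastIdx n then 1 else 0) :=
  mul_div_cancel₀ _ (hd i)

theorem muStar_nonneg : 0 ≤ muStar d v c := le_max_right _ _

theorem zStar_last :
    zStar d v c (lastIdx n) =
      max (v (lastIdx n) - lamStar d v c * c (lastIdx n)) 0 / d (lastIdx n) := by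
  rw [zStar, muStar, if_pos rfl, mul_one, ← max_add_add_left, add_neg_cancel, add_zero, max_comm]

theorem zStar_last_nonneg (hd : 0 < d (lastIdx n)) : 0 ≤ zStar d v c (lastIdx n) :=
  zStar_last ▸ div_nonneg (le_max_right _ _) hd.le

theorem muStar_mul_zStar_last : muStar d v c * zStar d v c (lastIdx n) = 0 := by
  rw [zStar_last, muStar]
  rcases le_total 0 (v (lastIdx n) - lamStar d v c * c (lastIdx n)) with h | h
  · rw [max_eq_right (by linarith), zero_mul]
  · rw [max_eq_right h, zero_div, mul_zero]

theorem cDc_sub_last_pos (hd : ∀ i, 0 < d i) (hc : ∃ i, i ≠ lastIdx n ∧ c i ≠ 0) :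
    0 < cDc d c - c (lastIdx n) ^ 2 / d (lastIdx n) := by
  obtain ⟨i, hi, hci⟩ := hc
  rw [cDc, ← Finset.add_sum_erase _ _ (Finset.mem_univ (lastIdx n)), sq, add_sub_cancel_left]
  exact Finset.sum_pos' (fun j _ => div_nonneg (mul_self_nonneg _) (hd j).le)
    ⟨i, Finset.mem_erase.2 ⟨hi, Finset.mem_univ i⟩, div_pos (mul_self_pos.2 hci) (hd i)⟩

theorem cDc_pos (hd : ∀ i, 0 < d i) (hc : ∃ i, i ≠ lastIdx n ∧ c i ≠ 0) : 0 < cDc d c := by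
  have := cDc_sub_last_pos hd hc
  have : 0 ≤ c (lastIdx n) ^ 2 / d (lastIdx n) := div_nonneg (sq_nonneg _) (hd _).le
  linarith

theorem sum_mul_zStar :
    ∑ i, c i * zStar d v c i =
      cDv d v c - lamStar d v c * cDc d c + muStar d v c * (c (lastIdx n) / d (lastIdx n)) := by
  have hterm : ∀ i, c i * zStar d v c i =
      c i * v i / d i - lamStar d v c * (c i * c i / d i) +
        if i = lastIdx n then muStar d v c * (c (lastIdx n) / d (lastIdx n)) else 0 := by
    intro i
    rw [zStar]
    split_ifs with h
    · subst h; ring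
    · ring
  simp only [hterm, Finset.sum_add_distrib, Finset.sum_sub_distrib, ← Finset.mul_sum,
    Finset.sum_ite_eq', Finset.mem_univ, if_true, cDv, cDc]

theorem sub_div_mul_eq_div_mul_sub {a γ δ S Q : ℝ} (hQ : Q ≠ 0) (hQ' : Q - γ ^ 2 / δ ≠ 0) :
    a - (S - γ * a / δ) / (Q - γ ^ 2 / δ) * γ = Q / (Q - γ ^ 2 / δ) * (a - S / Q * γ) := by
  rw [div_mul_eq_mul_div, sub_div' hQ', div_mul_eq_mul_div]
  congr 1
  field_simp
  ring

theorem sum_mul_zStar_eq_zero (hd : ∀ i, 0 < d i) (hc : ∃ i, i ≠ lastIdx n ∧ c i ≠ 0) :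
    ∑ i, c i * zStar d v c i = 0 := by
  have hQ' := cDc_sub_last_pos hd hc
  have hQ := cDc_pos hd hc
  rw [sum_mul_zStar]
  -- The residual `vₙ - λ cₙ` at the restricted multiplier is a positive multiple of the one at
  -- `cDv / cDc`, so the test defining `1_A` also fixes its sign at `λ*`.
  by_cases hA : v (lastIdx n) - cDv d v c / cDc d c * c (lastIdx n) < 0
  · have hlam : lamStar d v c = (cDv d v c - c (lastIdx n) * v (lastIdx n) / d (lastIdx n)) /
        (cDc d c - c (lastIdx n) ^ 2 / d (lastIdx n)) := by
      simp only [lamStar, indA, if_pos hA, mul_one]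
    have hres : v (lastIdx n) - lamStar d v c * c (lastIdx n) < 0 := by
      rw [hlam, sub_div_mul_eq_div_mul_sub hQ.ne' hQ'.ne']
      exact mul_neg_of_pos_of_neg (div_pos hQ hQ') hA
    rw [muStar, max_eq_left (by linarith)]
    rw [eq_div_iff hQ'.ne'] at hlam
    linear_combination -hlam
  · have hlam : lamStar d v c = cDv d v c / cDc d c := by
      simp only [lamStar, indA, if_neg hA, mul_zero, sub_zero]
    rw [muStar, max_eq_right (by rw [hlam]; linarith), hlam, div_mul_cancel₀ _ hQ.ne']
    ring

theorem isKKTPoint_zStar (hd : ∀ i, 0 < d i) (hc : ∃ i, i ≠ lastIdx n ∧ c i ≠ 0) :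
    IsKKTPoint d v c (lastIdx n) (zStar d v c) (lamStar d v c) (muStar d v c) where
  stationary := mul_zStar fun i => (hd i).ne'
  dual_nonneg := muStar_nonneg
  sum_mul_eq_zero := sum_mul_zStar_eq_zero hd hc
  nonneg := zStar_last_nonneg (hd _)
  complementary := muStar_mul_zStar_last

end zStar

/-- `z*` is feasible and is the unique minimizer of the primal problem. -/
theorem primal_unique_minimizer
    (n : ℕ) (d v c : Fin (n + 2) → ℝ)
    (hd : ∀ i, 0 < d i)
    (hc : ∃ i : Fin (n + 2), i ≠ lastIdx n ∧ c i ≠ 0) :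
    (∑ i, c i * zStar d v c i = 0) ∧
    0 ≤ zStar d v c (lastIdx n) ∧
    (∀ z : Fin (n + 2) → ℝ, (∑ i, c i * z i = 0) → 0 ≤ z (lastIdx n) →
      f d v (zStar d v c) ≤ f d v z ∧
      (f d v (zStar d v c) = f d v z → z = zStar d v c)) := by
  have h := isKKTPoint_zStar (v := v) hd hc
  exact ⟨h.sum_mul_eq_zero, h.nonneg, fun z hcz hzn =>
    ⟨h.f_le (fun i => (hd i).le) hcz hzn, h.eq_of_f_eq hd hcz hzn⟩⟩

end Stmt0
end
end

section
/- The minimizer z* = D⁻¹(v − λ*c + μ*eₙ) of the primal problem satisfies the bound ‖z*‖ ≤ d_min⁻¹‖v‖, where d_min = min(d₁,…,dₙ) and ‖·‖ is the Euclidean norm on ℝⁿ. -/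
/-!
`z*` satisfies the KKT conditions of the primal problem: `D z* = v - λ* c + μ* eₙ` with
`c ⬝ z* = 0` and `μ* z*ₙ = 0` (`μ*` and `dₙ z*ₙ` are the negative and positive parts of
`vₙ - λ* cₙ`). Pairing the stationarity equation with `z*` gives `z* ⬝ D z* = z* ⬝ v`, hence
`d_min ‖z*‖² ≤ z* ⬝ D z* ≤ ‖z*‖ ‖v‖` by Cauchy–Schwarz.
-/

open Finset

noncomputable section

namespace Stmt1

/-- The last index of `Fin (n+2)`. -/
def lastIdx (n : ℕ) : Fin (n + 2) := Fin.last (n + 1)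

variable {n : ℕ}

/-- The Euclidean norm of a vector in `ℝ^m`. -/
def enorm {m : ℕ} (z : Fin m → ℝ) : ℝ := Real.sqrt (∑ i, z i ^ 2)

/-- `d_min = min(d₁,…,dₙ)`. -/
def dMin (d : Fin (n + 2) → ℝ) : ℝ := Finset.univ.inf' Finset.univ_nonempty d

/-- `c^⊤ D⁻¹ v` for the diagonal matrix `D = diag d`. -/
def cDv (d v c : Fin (n + 2) → ℝ) : ℝ := ∑ i, c i * v i / d i

/-- `c^⊤ D⁻¹ c` for the diagonal matrix `D = diag d`. -/
def cDc (d c : Fin (n + 2) → ℝ) : ℝ := ∑ i, c i * c i / d i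

/-- The indicator `1_A`. -/
def indA (d v c : Fin (n + 2) → ℝ) : ℝ :=
  if v (lastIdx n) - cDv d v c / cDc d c * c (lastIdx n) < 0 then 1 else 0

/-- `λ*`. -/
def lamStar (d v c : Fin (n + 2) → ℝ) : ℝ :=
  (cDv d v c - c (lastIdx n) * v (lastIdx n) / d (lastIdx n) * indA d v c) /
    (cDc d c - c (lastIdx n) ^ 2 / d (lastIdx n) * indA d v c)

/-- `μ* = max (-(vₙ - λ* cₙ)) 0`. -/
def muStar (d v c : Fin (n + 2) → ℝ) : ℝ :=
  max (-(v (lastIdx n) - lamStar d v c * c (lastIdx n))) 0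

/-- `z* = D⁻¹ (v - λ* c + μ* eₙ)`. -/
def zStar (d v c : Fin (n + 2) → ℝ) : Fin (n + 2) → ℝ := fun i =>
  (v i - lamStar d v c * c i + muStar d v c * (if i = lastIdx n then 1 else 0)) / d i

theorem enorm_le_inv_mul_enorm_of_sum_mul_sq_le {m : ℕ} {d z v : Fin m → ℝ} {δ : ℝ}
    (hδ : 0 < δ) (hδd : ∀ i, δ ≤ d i) (hzv : ∑ i, d i * z i ^ 2 ≤ ∑ i, z i * v i) :
    enorm z ≤ δ⁻¹ * enorm v := by
  have key : δ * enorm z * enorm z ≤ enorm v * enorm z :=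
    calc δ * enorm z * enorm z = ∑ i, δ * z i ^ 2 := by
          rw [mul_assoc, enorm, Real.mul_self_sqrt (by positivity), Finset.mul_sum]
      _ ≤ ∑ i, d i * z i ^ 2 := by gcongr with i; exact hδd i
      _ ≤ ∑ i, z i * v i := hzv
      _ ≤ enorm v * enorm z := by
          rw [mul_comm]; exact Real.sum_mul_le_sqrt_mul_sqrt _ _ _
  rw [le_inv_mul_iff₀ hδ]
  have hz0 : 0 ≤ enorm z := Real.sqrt_nonneg _
  rcases hz0.eq_or_lt with hz | hz
  · rw [← hz, mul_zero]; exact Real.sqrt_nonneg _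
  · exact le_of_mul_le_mul_right key hz

theorem dMin_pos {d : Fin (n + 2) → ℝ} (hd : ∀ i, 0 < d i) : 0 < dMin d :=
  (Finset.lt_inf'_iff _).2 fun i _ => hd i

theorem dMin_le (d : Fin (n + 2) → ℝ) (i : Fin (n + 2)) : dMin d ≤ d i :=
  Finset.inf'_le _ (Finset.mem_univ i)

section Optimality

variable (d v c : Fin (n + 2) → ℝ)

theorem zStar_last : zStar d v c (lastIdx n) =
    max (v (lastIdx n) - lamStar d v c * c (lastIdx n)) 0 / d (lastIdx n) := by
  rw [zStar, muStar, if_pos rfl, mul_one]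
  congr 1
  rcases le_total (v (lastIdx n) - lamStar d v c * c (lastIdx n)) 0 with h | h
  · rw [max_eq_left (neg_nonneg.2 h), max_eq_right h]; ring
  · rw [max_eq_right (neg_nonpos.2 h), max_eq_left h, add_zero]

theorem muStar_mul_zStar_last : muStar d v c * zStar d v c (lastIdx n) = 0 := by
  rw [zStar_last, muStar]
  rcases le_total (v (lastIdx n) - lamStar d v c * c (lastIdx n)) 0 with h | h
  · rw [max_eq_right h, zero_div, mul_zero]
  · rw [max_eq_right (neg_nonpos.2 h), zero_mul]

theorem sum_mul_zStar_eq : ∑ i, c i * zStar d v c i =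
    cDv d v c - lamStar d v c * cDc d c + muStar d v c * (c (lastIdx n) / d (lastIdx n)) := by
  simp only [zStar, cDv, cDc, mul_div_assoc', mul_add, mul_sub, add_div, sub_div,
    Finset.sum_add_distrib, Finset.sum_sub_distrib, Finset.mul_sum, mul_ite, mul_one, mul_zero,
    ite_div, zero_div, Finset.sum_ite_eq', Finset.mem_univ, if_true]
  congr 1
  · congr 1; refine Finset.sum_congr rfl fun i _ => by ring
  · ring

theorem sum_d_mul_zStar_sq (hd : ∀ i, d i ≠ 0) : ∑ i, d i * zStar d v c i ^ 2 =
    ∑ i, zStar d v c i * v i - lamStar d v c * ∑ i, c i * zStar d v c i +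
      muStar d v c * zStar d v c (lastIdx n) := by
  have hdz : ∀ i, d i * zStar d v c i = v i - lamStar d v c * c i +
      muStar d v c * (if i = lastIdx n then 1 else 0) := fun i => mul_div_cancel₀ _ (hd i)
  calc ∑ i, d i * zStar d v c i ^ 2 = ∑ i, zStar d v c i * (d i * zStar d v c i) :=
        Finset.sum_congr rfl fun i _ => by ring
    _ = ∑ i, (zStar d v c i * v i - lamStar d v c * (c i * zStar d v c i) +
          muStar d v c * (if i = lastIdx n then zStar d v c i else 0)) :=
        Finset.sum_congr rfl fun i _ => by rw [hdz]; split_ifs <;> ring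
    _ = _ := by
        rw [Finset.sum_add_distrib, Finset.sum_sub_distrib, ← Finset.mul_sum, ← Finset.mul_sum,
          Finset.sum_ite_eq' Finset.univ, if_pos (Finset.mem_univ _)]

theorem cDc_sub_last_pos (hd : ∀ i, 0 < d i) (hc : ∃ i, i ≠ lastIdx n ∧ c i ≠ 0) :
    0 < cDc d c - c (lastIdx n) ^ 2 / d (lastIdx n) := by
  obtain ⟨j, hjN, hj⟩ := hc
  rw [cDc, ← Finset.add_sum_erase _ _ (Finset.mem_univ (lastIdx n)), sq, add_sub_cancel_left]
  exact Finset.sum_pos' (fun i _ => div_nonneg (mul_self_nonneg _) (hd i).le)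
    ⟨j, Finset.mem_erase.2 ⟨hjN, Finset.mem_univ j⟩, div_pos (mul_self_pos.2 hj) (hd j)⟩

theorem sum_mul_zStar_eq_zero (hd : ∀ i, 0 < d i) (hc : ∃ i, i ≠ lastIdx n ∧ c i ≠ 0) :
    ∑ i, c i * zStar d v c i = 0 := by
  rw [sum_mul_zStar_eq]
  set N := lastIdx n
  have hS : 0 < cDc d c - c N ^ 2 / d N := cDc_sub_last_pos d c hd hc
  have hC : 0 < cDc d c := by have := div_nonneg (sq_nonneg (c N)) (hd N).le; linarith
  have hdN := (hd N).ne'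
  have hS' : d N * cDc d c - c N ^ 2 ≠ 0 := by
    rw [sub_div' hdN, div_pos_iff_of_pos_right (hd N), mul_comm] at hS; exact hS.ne'
  by_cases hA : v N - cDv d v c / cDc d c * c N < 0
  · have hlam : lamStar d v c = (cDv d v c - c N * v N / d N) / (cDc d c - c N ^ 2 / d N) := by
      rw [lamStar, indA, if_pos hA, mul_one, mul_one]
    -- the sign condition `A` on the unconstrained multiplier carries over to `λ*`
    have hneg : v N - lamStar d v c * c N < 0 := by
      have key : (v N - lamStar d v c * c N) * (cDc d c - c N ^ 2 / d N) =
          (v N - cDv d v c / cDc d c * c N) * cDc d c := by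
        rw [hlam]; field_simp; ring
      refine lt_of_mul_lt_mul_right ?_ hS.le
      rw [key, zero_mul]
      exact mul_neg_of_neg_of_pos hA hC
    have hmu : muStar d v c = lamStar d v c * c N - v N := by
      rw [muStar, max_eq_left (by linarith)]; ring
    rw [hmu, hlam]; field_simp; ring
  · have hlam : lamStar d v c = cDv d v c / cDc d c := by
      rw [lamStar, indA, if_neg hA, mul_zero, mul_zero, sub_zero, sub_zero]
    have hmu : muStar d v c = 0 := max_eq_right (by rw [hlam]; linarith [not_lt.1 hA])
    rw [hmu, hlam]; field_simp; ring

end Optimality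

/-- The minimizer `z*` of the primal problem satisfies `‖z*‖ ≤ d_min⁻¹ ‖v‖`. -/
theorem zStar_norm_bound
    (n : ℕ) (d v c : Fin (n + 2) → ℝ)
    (hd : ∀ i, 0 < d i)
    (hc : ∃ i : Fin (n + 2), i ≠ lastIdx n ∧ c i ≠ 0) :
    enorm (zStar d v c) ≤ (dMin d)⁻¹ * enorm v := by
  refine enorm_le_inv_mul_enorm_of_sum_mul_sq_le (dMin_pos hd) (dMin_le d) (le_of_eq ?_)
  rw [sum_d_mul_zStar_sq d v c fun i => (hd i).ne', sum_mul_zStar_eq_zero d v c hd hc,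
    muStar_mul_zStar_last, mul_zero, sub_zero, add_zero]

end Stmt1
end
end
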